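/- Let G be a connected pseudograph and C ∈ 2^{C_G}_even. Then the geometric realization of K'_{C,G} is homotopy equivalent to the geometric realization of K''_{C,G}. -/

import Mathlib

attribute [local instance] Classical.propDecidable

/-- An abstract simplicial complex on a vertex type `α` (faces are downward closed). -/
structure ASC (α : Type) where
  faces : Set (Finset α)
  down_closed : ∀ {s t : Finset α}, s ∈ faces → t ⊆ s → t ∈ faces

namespace ASC

variable {α β : Type}

/-- The geometric realization of an abstract simplicial complex, as the space of
convex-combination weight functions supported on a face. -/
def realization [Fintype α] (K : ASC α) : Type :=
  {f : α → ℝ // (∀ a, 0 ≤ f a) ∧ (∑ a, f a) = 1 ∧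
    (Finset.univ.filter fun a => f a ≠ 0) ∈ K.faces}

instance [Fintype α] (K : ASC α) : TopologicalSpace K.realization :=
  inferInstanceAs (TopologicalSpace {f : α → ℝ // _})

/-- `a` is a vertex of `K`. -/
def IsVertex (K : ASC α) (a : α) : Prop := {a} ∈ K.faces

/-- The complex `K \ St a`: all faces of `K` not containing `a`. -/
def delStar (K : ASC α) (a : α) : ASC α where
  faces := {s | s ∈ K.faces ∧ a ∉ s}
  down_closed := fun hs hts => ⟨K.down_closed hs.1 hts, fun hat => hs.2 (hts hat)⟩

/-- The link of a vertex `a` in `K`. -/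
def link (K : ASC α) (a : α) : ASC α where
  faces := {s | s ∈ K.faces ∧ a ∉ s ∧ insert a s ∈ K.faces}
  down_closed := fun hs hts =>
    ⟨K.down_closed hs.1 hts, fun hat => hs.2.1 (hts hat),
      K.down_closed hs.2.2 (Finset.insert_subset_insert _ hts)⟩

/-- The join of two abstract simplicial complexes. -/
def join (K : ASC α) (L : ASC β) : ASC (α ⊕ β) where
  faces := {s | ∃ u ∈ K.faces, ∃ v ∈ L.faces, s = u.image Sum.inl ∪ v.image Sum.inr}
  down_closed := by
    rintro s t ⟨u, hu, v, hv, rfl⟩ hts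
    refine ⟨u.filter (fun x => Sum.inl x ∈ t), K.down_closed hu (Finset.filter_subset _ _),
      v.filter (fun y => Sum.inr y ∈ t), L.down_closed hv (Finset.filter_subset _ _), ?_⟩
    ext x
    constructor
    · intro hx
      have hx' := hts hx
      simp only [Finset.mem_union, Finset.mem_image, Finset.mem_filter] at hx' ⊢
      rcases hx' with ⟨y, hy, rfl⟩ | ⟨y, hy, rfl⟩
      · exact Or.inl ⟨y, ⟨hy, hx⟩, rfl⟩
      · exact Or.inr ⟨y, ⟨hy, hx⟩, rfl⟩
    · intro hx
      simp only [Finset.mem_union, Finset.mem_image, Finset.mem_filter] at hx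
      rcases hx with ⟨y, ⟨hy, hyt⟩, rfl⟩ | ⟨y, ⟨hy, hyt⟩, rfl⟩ <;> exact hyt

/-- The join of a finite family of simplicial complexes on a common vertex type
(with pairwise disjoint vertex sets in applications). -/
def famJoin {ι : Type} [Fintype ι] (K : ι → ASC α) : ASC α where
  faces := {s | ∃ f : ι → Finset α, (∀ i, f i ∈ (K i).faces) ∧ s = Finset.univ.biUnion f}
  down_closed := by
    intro s t hs hts
    obtain ⟨f, hf, rfl⟩ := hs
    refine ⟨fun i => f i ∩ t, fun i => (K i).down_closed (hf i) Finset.inter_subset_left, ?_⟩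
    ext a
    simp only [Finset.mem_biUnion, Finset.mem_inter, Finset.mem_univ, true_and]
    constructor
    · intro ha
      obtain ⟨i, hi⟩ := Finset.mem_biUnion.1 (hts ha)
      exact ⟨i, hi.2, ha⟩
    · rintro ⟨i, hi, ha⟩
      exact ha

end ASC

/-! ## Pseudographs, tubes and tubing complexes -/

/-- An ambient multigraph structure without loops: each edge label in `E` is assigned an
unordered pair of distinct nodes of `V`. -/
structure Amb (V E : Type) where
  ends : E → Sym2 V
  noLoop : ∀ e, ¬ (ends e).IsDiag

variable {V E : Type} [Fintype V] [Fintype E] [DecidableEq V] [DecidableEq E]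

/-- A pseudograph (without loops) on nodes from `V` with edges from `E`: a subgraph of the
ambient structure `A`, given by a finite set of nodes and a finite set of edges whose
endpoints belong to the node set. -/
structure PSG (A : Amb V E) where
  verts : Finset V
  edges : Finset E
  incl : ∀ e ∈ edges, ∀ v ∈ A.ends e, v ∈ verts

namespace PSG

variable {A : Amb V E}

noncomputable instance : DecidableEq (PSG A) := Classical.decEq _

noncomputable instance : Fintype (PSG A) :=
  Fintype.ofInjective (fun H => (H.verts, H.edges))
    (by intro a b h; cases a; cases b; simp_all)

/-- The parallel class (possibly a bundle) of edges of `H` with endpoint pair `s`. -/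
def cls (H : PSG A) (s : Sym2 V) : Finset E :=
  H.edges.filter fun e => A.ends e = s

/-- `e` is a multiple edge of `H`. -/
def MultipleIn (H : PSG A) (e : E) : Prop :=
  e ∈ H.edges ∧ 2 ≤ (H.cls (A.ends e)).card

/-- `I` is a subgraph of `H`. -/
def Le (I H : PSG A) : Prop := I.verts ⊆ H.verts ∧ I.edges ⊆ H.edges

/-- Adjacency of two nodes via an edge of `H`. -/
def adjIn (H : PSG A) (v w : V) : Prop := ∃ e ∈ H.edges, A.ends e = s(v, w)

/-- Reachability inside `H`. -/
def reachIn (H : PSG A) : V → V → Prop := Relation.ReflTransGen (adjIn H)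

/-- `H` is a (nonempty) connected pseudograph. -/
def ConnIn (H : PSG A) : Prop :=
  H.verts.Nonempty ∧ ∀ v ∈ H.verts, ∀ w ∈ H.verts, reachIn H v w

/-- `I` is a semi-induced subgraph of `H`: it contains at least one edge between every
pair of its nodes joined by an edge of `H`. -/
def SemiInducedIn (H I : PSG A) : Prop :=
  Le I H ∧ ∀ e ∈ H.edges, (∀ v ∈ A.ends e, v ∈ I.verts) →
    ∃ e' ∈ I.edges, A.ends e' = A.ends e

/-- `J` is a connected component of `H`. -/
def IsComponent (H J : PSG A) : Prop :=
  Le J H ∧ J.verts.Nonempty ∧ ConnIn J ∧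
    (J.edges = H.edges.filter fun e => ∀ v ∈ A.ends e, v ∈ J.verts) ∧
    ∀ e ∈ H.edges, (∃ v ∈ A.ends e, v ∈ J.verts) → ∀ v ∈ A.ends e, v ∈ J.verts

/-- `I` is properly contained in its connected component of `H`. -/
def ProperIn (H I : PSG A) : Prop :=
  (∃ v ∈ H.verts, v ∉ I.verts ∧ ∃ w ∈ I.verts, reachIn H v w) ∨
    (∃ e ∈ H.edges, (∀ v ∈ A.ends e, v ∈ I.verts) ∧ e ∉ I.edges)

/-- `I` is a tube of `H`: a proper connected semi-induced subgraph of a connected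
component of `H`. -/
def TubeIn (H I : PSG A) : Prop := SemiInducedIn H I ∧ ConnIn I ∧ ProperIn H I

/-- Two subgraphs meet by separation in `H`: they are disjoint and no edge of `H`
connects them. -/
def SeparatedIn (H I J : PSG A) : Prop :=
  Disjoint I.verts J.verts ∧
    ∀ e ∈ H.edges, ¬ ((∃ v ∈ A.ends e, v ∈ I.verts) ∧ ∃ v ∈ A.ends e, v ∈ J.verts)

/-- Two tubes are compatible: they coincide, meet by inclusion, or meet by separation. -/
def Compatible (H I J : PSG A) : Prop :=
  I = J ∨ Le I J ∨ Le J I ∨ SeparatedIn H I J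

/-- The simplicial complex of all tubings of `H` (dual to the boundary of the pseudograph
associahedron `P_H`). -/
def tubingComplex (H : PSG A) : ASC (PSG A) where
  faces := {S | (∀ I ∈ S, TubeIn H I) ∧ ∀ I ∈ S, ∀ J ∈ S, Compatible H I J}
  down_closed := fun hs hts =>
    ⟨fun I hI => hs.1 I (hts hI), fun I hI J hJ => hs.2 I (hts hI) J (hts hJ)⟩

end PSG

/-- A collection of nodes and (multiple) edges, i.e. a candidate subset of `C_G`. -/
abbrev Coll (V E : Type) := Finset V × Finset E

namespace PSG

variable {A : Amb V E}

/-- The number of elements of the collection `C` belonging to the subgraph `I`,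
i.e. `|I ∩ C|`. -/
def interCard (I : PSG A) (C : Coll V E) : ℕ :=
  (I.verts ∩ C.1).card + (I.edges ∩ C.2).card

/-- `C ∈ 2^{C_G}_even`: `C` consists of nodes and multiple edges of `G`, with evenly many
nodes and evenly many edges from each bundle. -/
def EvenColl (G : PSG A) (C : Coll V E) : Prop :=
  C.1 ⊆ G.verts ∧ C.2 ⊆ G.edges ∧ (∀ e ∈ C.2, MultipleIn G e) ∧
    Even C.1.card ∧ ∀ s : Sym2 V, Even ((C.2 ∩ G.cls s).card)

/-- The subgraph `Γ̃_G(C)` of `G` induced by the nodes belonging to `C` or incident to an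
edge of `C`. -/
def GammaTilde (G : PSG A) (C : Coll V E) : PSG A where
  verts := G.verts.filter fun v => v ∈ C.1 ∨ ∃ e ∈ C.2, v ∈ A.ends e
  edges := G.edges.filter fun e => ∀ v ∈ A.ends e,
    v ∈ G.verts.filter fun v => v ∈ C.1 ∨ ∃ e ∈ C.2, v ∈ A.ends e
  incl := by
    intro e he v hv
    exact (Finset.mem_filter.1 he).2 v hv

/-- The simplicial complex `K^odd_{C,G}`: tubings of `G` consisting of tubes `I` with
`|I ∩ C|` odd. -/
def Kodd (G : PSG A) (C : Coll V E) : ASC (PSG A) where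
  faces := {S | S ∈ (tubingComplex G).faces ∧ ∀ I ∈ S, Odd (interCard I C)}
  down_closed := fun hs hts =>
    ⟨(tubingComplex G).down_closed hs.1 hts, fun I hI => hs.2 I (hts hI)⟩

/-- The subcomplex `K'_{C,G}` of `K^odd_{C,G}` on the tubes contained in `Γ̃_G(C)`. -/
def Kp (G : PSG A) (C : Coll V E) : ASC (PSG A) where
  faces := {S | S ∈ (Kodd G C).faces ∧ ∀ I ∈ S, Le I (GammaTilde G C)}
  down_closed := fun hs hts =>
    ⟨(Kodd _ _).down_closed hs.1 hts, fun I hI => hs.2 I (hts hI)⟩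

/-- The bundle condition on a tube `I`: for every bundle `B` of `Γ̃_G(C)` disjoint from
`C`, if both endpoints of `B` lie in `I` then `B ⊆ I`. -/
def BundleOK (G : PSG A) (C : Coll V E) (I : PSG A) : Prop :=
  ∀ s : Sym2 V, 2 ≤ ((GammaTilde G C).cls s).card →
    C.2 ∩ (GammaTilde G C).cls s = ∅ →
    (∀ v ∈ s, v ∈ I.verts) → (GammaTilde G C).cls s ⊆ I.edges

/-- The subcomplex `K''_{C,G}` of `K'_{C,G}` on the tubes satisfying the bundle
condition. -/
def Kpp (G : PSG A) (C : Coll V E) : ASC (PSG A) where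
  faces := {S | S ∈ (Kp G C).faces ∧ ∀ I ∈ S, BundleOK G C I}
  down_closed := fun hs hts =>
    ⟨(Kp _ _).down_closed hs.1 hts, fun I hI => hs.2 I (hts hI)⟩

/-- The restriction `C ∩ J` of a collection to a subgraph `J`. -/
def restrictColl (C : Coll V E) (J : PSG A) : Coll V E := (C.1 ∩ J.verts, C.2 ∩ J.edges)

/-- `C ∈ 2^{C_G}_even*`: moreover every connected component of `Γ̃_G(C)` is even with
respect to `C`. -/
def EvenStar (G : PSG A) (C : Coll V E) : Prop :=
  EvenColl G C ∧ ∀ J : PSG A, IsComponent (GammaTilde G C) J → Even (interCard J C)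

/-- The subgraph of `G` induced by a set `W` of nodes. -/
def inducedSub (G : PSG A) (W : Finset V) : PSG A where
  verts := W ∩ G.verts
  edges := G.edges.filter fun e => ∀ v ∈ A.ends e, v ∈ W ∩ G.verts
  incl := by
    intro e he v hv
    exact (Finset.mem_filter.1 he).2 v hv

/-- `H` is a partial underlying pseudograph of `H'`: it has the same nodes, and each
parallel class of `H'` is either kept entirely or replaced by a single (simple) edge. -/
def PartialUnderlying (H' H : PSG A) : Prop :=
  H.verts = H'.verts ∧ H.edges ⊆ H'.edges ∧
    ∀ s : Sym2 V, H'.cls s ⊆ H.edges ∨ (H.edges ∩ H'.cls s).card = 1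

/-- `H ⋖ G`: `H` is a partial underlying pseudograph of an induced subgraph of `G`. -/
def Lt (H G : PSG A) : Prop := ∃ W : Finset V, PartialUnderlying (inducedSub G W) H

/-- `H` is (a representative of) the pseudograph `Γ_G(C)`, obtained from `Γ̃_G(C)` by
replacing each bundle disjoint from `C` by a single simple edge. -/
def IsGammaOf (G : PSG A) (C : Coll V E) (H : PSG A) : Prop :=
  H.verts = (GammaTilde G C).verts ∧ H.edges ⊆ (GammaTilde G C).edges ∧
    ∀ s : Sym2 V,
      (((C.2 ∩ (GammaTilde G C).cls s).Nonempty ∨ ((GammaTilde G C).cls s).card ≤ 1) →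
        (GammaTilde G C).cls s ⊆ H.edges) ∧
      (C.2 ∩ (GammaTilde G C).cls s = ∅ → 2 ≤ ((GammaTilde G C).cls s).card →
        (H.edges ∩ (GammaTilde G C).cls s).card = 1)

/-- Admissibility of a collection `C` for a connected pseudograph `J`:
(a1) evenness, (a2) `C` contains every node not incident to a bundle, and
(a3) `C` meets every bundle. -/
def AdmissibleConn (J : PSG A) (C : Coll V E) : Prop :=
  Even ((C.1 ∩ J.verts).card) ∧ (∀ s : Sym2 V, Even ((C.2 ∩ J.cls s).card)) ∧
    (∀ v ∈ J.verts, (∀ s : Sym2 V, v ∈ s → (J.cls s).card ≤ 1) → v ∈ C.1) ∧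
    ∀ s : Sym2 V, 2 ≤ (J.cls s).card → (C.2 ∩ J.cls s).Nonempty

/-- `C` is an admissible collection of the pseudograph `H` (componentwise). -/
def Admissible (H : PSG A) (C : Coll V E) : Prop :=
  C.1 ⊆ H.verts ∧ C.2 ⊆ H.edges ∧ (∀ e ∈ C.2, MultipleIn H e) ∧
    ∀ J : PSG A, IsComponent H J → AdmissibleConn J C

end PSG


namespace ASC

variable {α : Type}

lemma ext' {K L : ASC α} (h : K.faces = L.faces) : K = L := by
  cases K; cases L; cases h; rfl

/-- The complex of faces of `K` avoiding a finite set `R` of vertices. -/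
def avoid (K : ASC α) (R : Finset α) : ASC α where
  faces := {s | s ∈ K.faces ∧ ∀ a ∈ R, a ∉ s}
  down_closed := fun hs hts => ⟨K.down_closed hs.1 hts, fun a ha hmem => hs.2 a ha (hts hmem)⟩

noncomputable def push (a b : α) (t : ℝ) (f : α → ℝ) : α → ℝ :=
  fun x => f x + t * f a * ((if x = b then (1:ℝ) else 0) - (if x = a then (1:ℝ) else 0))

variable [Fintype α]

lemma push_mem (K : ASC α) (a b : α) (hab : b ≠ a)
    (hcone : ∀ s ∈ K.faces, a ∈ s → insert b s ∈ K.faces)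
    (t : ℝ) (ht0 : 0 ≤ t) (ht1 : t ≤ 1) (f : α → ℝ)
    (hf0 : ∀ x, 0 ≤ f x) (hf1 : (∑ x, f x) = 1)
    (hff : (Finset.univ.filter fun x => f x ≠ 0) ∈ K.faces) :
    (∀ x, 0 ≤ push a b t f x) ∧ (∑ x, push a b t f x) = 1 ∧
      (Finset.univ.filter fun x => push a b t f x ≠ 0) ∈ K.faces ∧
      (t = 1 → a ∉ (Finset.univ.filter fun x => push a b t f x ≠ 0)) := by
  have hpa : push a b t f a = (1 - t) * f a := by
    simp [push, hab.symm]; ring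
  have hpb : push a b t f b = f b + t * f a := by
    simp [push, hab]
  refine ⟨?_, ?_, ?_, ?_⟩
  · intro x
    by_cases hx : x = a
    · rw [hx, hpa]; nlinarith [hf0 a]
    · by_cases hxb : x = b
      · rw [hxb, hpb]; nlinarith [hf0 a, hf0 b]
      · simp [push, hx, hxb, hf0 x]
  · have h1 : (∑ x, push a b t f x) = (∑ x, f x) + ∑ x, t * f a *
        ((if x = b then (1:ℝ) else 0) - (if x = a then (1:ℝ) else 0)) :=
      Finset.sum_add_distrib
    rw [h1, hf1, ← Finset.mul_sum, Finset.sum_sub_distrib]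
    simp [Finset.sum_ite_eq']
  · by_cases hfa : f a = 0
    · have hpf : push a b t f = f := by
        funext x; simp [push, hfa]
      rw [hpf]; exact hff
    · have hmem : (Finset.univ.filter fun x => push a b t f x ≠ 0) ⊆
          insert b (Finset.univ.filter fun x => f x ≠ 0) := by
        intro x hx
        by_cases hxb : x = b
        · simp [hxb]
        · by_cases hxa : x = a
          · subst hxa
            simp [Finset.mem_insert, hfa]
          · simp only [Finset.mem_filter, Finset.mem_univ, true_and] at hx
            simp only [push, hxb, hxa, if_false] at hx
            simp only [Finset.mem_insert, Finset.mem_filter, Finset.mem_univ, true_and]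
            right
            intro h0; apply hx; rw [h0]; ring
      exact K.down_closed (hcone _ hff (by simp [hfa])) hmem
  · intro ht
    subst ht
    simp [hpa]

noncomputable def pushMap (K : ASC α) (a b : α) (hab : b ≠ a)
    (hcone : ∀ s ∈ K.faces, a ∈ s → insert b s ∈ K.faces) :
    C(K.realization, (K.delStar a).realization) where
  toFun f := ⟨push a b 1 f.1, by
    obtain ⟨h0, h1, h2, h3⟩ := push_mem K a b hab hcone 1 zero_le_one le_rfl f.1
      f.2.1 f.2.2.1 f.2.2.2
    exact ⟨h0, h1, ⟨h2, h3 rfl⟩⟩⟩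
  continuous_toFun := by
    apply Continuous.subtype_mk
    apply continuous_pi
    intro x
    exact ((continuous_apply x).comp continuous_subtype_val).add
      (((continuous_const.mul ((continuous_apply a).comp continuous_subtype_val)).mul
        continuous_const))

noncomputable def inclMap (K : ASC α) (a : α) :
    C((K.delStar a).realization, K.realization) where
  toFun f := ⟨f.1, f.2.1, f.2.2.1, f.2.2.2.1⟩
  continuous_toFun := Continuous.subtype_mk continuous_subtype_val _

theorem cone_delStar (K : ASC α) (a b : α) (hab : b ≠ a)
    (hcone : ∀ s ∈ K.faces, a ∈ s → insert b s ∈ K.faces) :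
    Nonempty (ContinuousMap.HomotopyEquiv K.realization (K.delStar a).realization) := by
  refine ⟨⟨pushMap K a b hab hcone, inclMap K a, ?_, ?_⟩⟩
  · refine ⟨⟨ContinuousMap.mk (fun p => ⟨push a b (1 - p.1.1) p.2.1, ?_⟩) ?_, ?_, ?_⟩⟩
    · obtain ⟨h0, h1, h2, _⟩ := push_mem K a b hab hcone (1 - p.1.1)
        (by have := p.1.2.2; simp; linarith) (by have := p.1.2.1; linarith) p.2.1
        p.2.2.1 p.2.2.2.1 p.2.2.2.2
      exact ⟨h0, h1, h2⟩
    · apply Continuous.subtype_mk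
      apply continuous_pi
      intro x
      have hc : Continuous fun p : (unitInterval × K.realization) => (1 - (p.1 : ℝ)) :=
        continuous_const.sub (continuous_subtype_val.comp continuous_fst)
      have he : ∀ y : α, Continuous fun p : (unitInterval × K.realization) => p.2.1 y :=
        fun y => (continuous_apply y).comp (continuous_subtype_val.comp continuous_snd)
      exact (he x).add (((hc.mul (he a)).mul continuous_const))
    · intro f
      apply Subtype.ext
      show push a b (1 - 0) f.1 = push a b 1 f.1
      norm_num
    · intro f
      apply Subtype.ext
      show push a b (1 - 1) f.1 = f.1
      funext x
      simp [push]
  · have heq : (pushMap K a b hab hcone).comp (inclMap K a) =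
        ContinuousMap.id (K.delStar a).realization := by
      apply ContinuousMap.ext
      intro f
      apply Subtype.ext
      funext x
      have hfa : f.1 a = 0 := by
        by_contra h
        exact f.2.2.2.2 (Finset.mem_filter.2 ⟨Finset.mem_univ a, h⟩)
      show push a b 1 f.1 x = f.1 x
      simp [push, hfa]
    rw [heq]

end ASC

namespace PSG

variable {V E : Type} [Fintype V] [Fintype E] [DecidableEq V] [DecidableEq E] {A : Amb V E}

lemma ext' {I J : PSG A} (hv : I.verts = J.verts) (he : I.edges = J.edges) : I = J := by
  cases I; cases J; cases hv; cases he; rfl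

/-- size of a subgraph -/
def sz (I : PSG A) : ℕ := I.verts.card + I.edges.card

lemma sz_lt_of_le_ne {I J : PSG A} (h : Le I J) (hne : I ≠ J) : sz I < sz J := by
  by_cases hv : I.verts = J.verts
  · have he : I.edges ⊂ J.edges := ⟨h.2, fun hsub => hne (ext' hv (Finset.Subset.antisymm h.2 hsub))⟩
    have := Finset.card_lt_card he
    have := Finset.card_le_card h.1
    unfold sz; omega
  · have hv' : I.verts ⊂ J.verts := ⟨h.1, fun hsub => hv (Finset.Subset.antisymm h.1 hsub)⟩
    have := Finset.card_lt_card hv'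
    have := Finset.card_le_card h.2
    unfold sz; omega

lemma compatible_symm {G I J : PSG A} (h : Compatible G I J) : Compatible G J I := by
  rcases h with rfl | h | h | h
  · exact Or.inl rfl
  · exact Or.inr (Or.inr (Or.inl h))
  · exact Or.inr (Or.inl h)
  · exact Or.inr (Or.inr (Or.inr ⟨h.1.symm, fun e he hp => h.2 e he ⟨hp.2, hp.1⟩⟩))

lemma mem_cls {H : PSG A} {e : E} {s : Sym2 V} :
    e ∈ H.cls s ↔ e ∈ H.edges ∧ A.ends e = s := Finset.mem_filter

lemma self_mem_cls {H : PSG A} {e : E} (he : e ∈ H.edges) : e ∈ H.cls (A.ends e) :=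
  mem_cls.2 ⟨he, rfl⟩

/-- The bundle-closure `Î` of a tube `I`. -/
noncomputable def hat (G : PSG A) (C : Coll V E) (I : PSG A) : PSG A where
  verts := I.verts
  edges := I.edges ∪ (GammaTilde G C).edges.filter (fun e =>
    2 ≤ ((GammaTilde G C).cls (A.ends e)).card ∧
    C.2 ∩ (GammaTilde G C).cls (A.ends e) = ∅ ∧ ∀ v ∈ A.ends e, v ∈ I.verts)
  incl := by
    intro e he v hv
    rcases Finset.mem_union.1 he with h | h
    · exact I.incl e h v hv
    · exact ((Finset.mem_filter.1 h).2).2.2 v hv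

lemma hat_verts {G : PSG A} {C : Coll V E} {I : PSG A} : (hat G C I).verts = I.verts := rfl

lemma le_hat {G : PSG A} {C : Coll V E} {I : PSG A} : Le I (hat G C I) :=
  ⟨Finset.Subset.refl _, Finset.subset_union_left⟩

lemma hat_ne {G : PSG A} {C : Coll V E} {I : PSG A} (hbad : ¬ BundleOK G C I) :
    hat G C I ≠ I := by
  unfold BundleOK at hbad
  push_neg at hbad
  obtain ⟨s, h2, hdisj, hverts, hnsub⟩ := hbad
  obtain ⟨e, hecls, heI⟩ := Finset.not_subset.1 hnsub
  have hends : A.ends e = s := (mem_cls.1 hecls).2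
  have hehat : e ∈ (hat G C I).edges := by
    apply Finset.mem_union_right
    refine Finset.mem_filter.2 ⟨(mem_cls.1 hecls).1, ?_, ?_, ?_⟩
    · rw [hends]; exact h2
    · rw [hends]; exact hdisj
    · rw [hends]; exact hverts
  intro heq
  rw [heq] at hehat
  exact heI hehat

lemma hat_bundleOK (G : PSG A) (C : Coll V E) (I : PSG A) : BundleOK G C (hat G C I) := by
  intro s h2 hdisj hverts e hecls
  apply Finset.mem_union_right
  have hends : A.ends e = s := (mem_cls.1 hecls).2
  refine Finset.mem_filter.2 ⟨(mem_cls.1 hecls).1, ?_, ?_, ?_⟩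
  · rw [hends]; exact h2
  · rw [hends]; exact hdisj
  · rw [hends]; exact hverts

lemma C2_subset_gammaE {G : PSG A} {C : Coll V E} (hC : EvenColl G C) :
    C.2 ⊆ (GammaTilde G C).edges := by
  intro e he
  refine Finset.mem_filter.2 ⟨hC.2.1 he, ?_⟩
  intro v hv
  exact Finset.mem_filter.2 ⟨G.incl e (hC.2.1 he) v hv, Or.inr ⟨e, he, hv⟩⟩

lemma hat_interCard {G : PSG A} {C : Coll V E} (hC : EvenColl G C) (I : PSG A) :
    interCard (hat G C I) C = interCard I C := by
  unfold interCard
  congr 1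
  congr 1
  ext e
  simp only [Finset.mem_inter, hat, Finset.mem_union, Finset.mem_filter]
  constructor
  · rintro ⟨heI | ⟨heG, _, hdisj, _⟩, heC⟩
    · exact ⟨heI, heC⟩
    · exfalso
      have : e ∈ C.2 ∩ (GammaTilde G C).cls (A.ends e) :=
        Finset.mem_inter.2 ⟨heC, self_mem_cls heG⟩
      rw [hdisj] at this
      exact absurd this (Finset.notMem_empty e)
  · rintro ⟨heI, heC⟩
    exact ⟨Or.inl heI, heC⟩

lemma even_C2_card {G : PSG A} {C : Coll V E} (hC : EvenColl G C) : Even C.2.card := by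
  rw [Finset.card_eq_sum_card_image A.ends C.2]
  apply Finset.even_sum
  intro s _
  have h := hC.2.2.2.2 s
  have heq : C.2 ∩ G.cls s = C.2.filter (fun e => A.ends e = s) := by
    ext e
    simp only [Finset.mem_inter, Finset.mem_filter, cls]
    constructor
    · rintro ⟨h1, _, h3⟩; exact ⟨h1, h3⟩
    · rintro ⟨h1, h3⟩; exact ⟨h1, hC.2.1 h1, h3⟩
  rwa [heq] at h

lemma hat_tube {G : PSG A} {C : Coll V E} (hG : ConnIn G) (hC : EvenColl G C) {I : PSG A}
    (htube : TubeIn G I) (hodd : Odd (interCard I C)) : TubeIn G (hat G C I) := by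
  obtain ⟨⟨hleG, hsemi⟩, hconn, _⟩ := htube
  have hatleG : Le (hat G C I) G := by
    refine ⟨hleG.1, Finset.union_subset hleG.2 ?_⟩
    exact (Finset.filter_subset _ _).trans (Finset.filter_subset _ _)
  refine ⟨⟨hatleG, ?_⟩, ⟨hconn.1, ?_⟩, ?_⟩
  · intro e he hv
    obtain ⟨e', he', hee⟩ := hsemi e he hv
    exact ⟨e', Finset.mem_union_left _ he', hee⟩
  · intro v hv w hw
    refine Relation.ReflTransGen.mono ?_ _ _ (hconn.2 v hv w hw)
    rintro x y ⟨e, he, hends⟩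
    exact ⟨e, Finset.mem_union_left _ he, hends⟩
  · by_cases hv : ∀ v ∈ G.verts, v ∈ I.verts
    · by_cases hedge : ∀ e ∈ G.edges, e ∈ (hat G C I).edges
      · exfalso
        have hC1 : I.verts ∩ C.1 = C.1 :=
          Finset.inter_eq_right.2 (fun v hvC => hv v (hC.1 hvC))
        have hC2 : I.edges ∩ C.2 = C.2 := by
          apply Finset.inter_eq_right.2
          intro e heC
          have heG : e ∈ G.edges := hC.2.1 heC
          rcases Finset.mem_union.1 (hedge e heG) with h | h
          · exact h
          · exfalso
            have hdisj := (Finset.mem_filter.1 h).2.2.1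
            have : e ∈ C.2 ∩ (GammaTilde G C).cls (A.ends e) :=
              Finset.mem_inter.2 ⟨heC, self_mem_cls (C2_subset_gammaE hC heC)⟩
            rw [hdisj] at this
            exact absurd this (Finset.notMem_empty e)
        have heven : Even (interCard I C) := by
          unfold interCard
          rw [hC1, hC2]
          exact (hC.2.2.2.1).add (even_C2_card hC)
        exact (Nat.not_odd_iff_even.2 heven) hodd
      · push_neg at hedge
        obtain ⟨e, heG, hne⟩ := hedge
        exact Or.inr ⟨e, heG, fun v hv' => hv v (G.incl e heG v hv'), hne⟩
    · push_neg at hv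
      obtain ⟨v, hvG, hvI⟩ := hv
      obtain ⟨w, hw⟩ := hconn.1
      exact Or.inl ⟨v, hvG, hvI, w, hw, hG.2 v hvG w (hleG.1 hw)⟩

lemma compat_hat_of {G : PSG A} {C : Coll V E} {I J : PSG A}
    (hcomp : Compatible G I J) (hgood : Le I J → I ≠ J → BundleOK G C J) :
    Compatible G (hat G C I) J := by
  rcases hcomp with rfl | hIJ | hJI | hsep
  · exact Or.inr (Or.inr (Or.inl le_hat))
  · by_cases hne : I = J
    · subst hne
      exact Or.inr (Or.inr (Or.inl le_hat))
    · have hOK := hgood hIJ hne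
      refine Or.inr (Or.inl ⟨hIJ.1, Finset.union_subset hIJ.2 ?_⟩)
      intro e he
      obtain ⟨heG, h2, hdisj, hverts⟩ := Finset.mem_filter.1 he
      exact hOK (A.ends e) h2 hdisj (fun v hv => hIJ.1 (hverts v hv)) (self_mem_cls heG)
  · exact Or.inr (Or.inr (Or.inl ⟨hJI.1, hJI.2.trans Finset.subset_union_left⟩))
  · exact Or.inr (Or.inr (Or.inr hsep))

end PSG

open PSG in
/-- For a connected pseudograph `G` and `C ∈ 2^{C_G}_even`, the
realization of `K'_{C,G}` is homotopy equivalent to that of its subcomplex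
`K''_{C,G}`. -/
theorem stmt10 {V E : Type} [Fintype V] [Fintype E] [DecidableEq V] [DecidableEq E]
    {A : Amb V E} (G : PSG A) (hG : ConnIn G) (C : Coll V E) (hC : EvenColl G C) :
    Nonempty (ContinuousMap.HomotopyEquiv
      (ASC.realization (Kp G C)) (ASC.realization (Kpp G C))) := by
  classical
  set Bad : Finset (PSG A) := Finset.univ.filter (fun I => ¬ BundleOK G C I) with hBad
  have key : ∀ n : ℕ, ∀ R : Finset (PSG A), R ⊆ Bad → (Bad \ R).card = n →
      Nonempty (ContinuousMap.HomotopyEquiv ((Kp G C).avoid R).realization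
        ((Kp G C).avoid Bad).realization) := by
    intro n
    induction n with
    | zero =>
      intro R hR hcard
      have hempty : Bad \ R = ∅ := Finset.card_eq_zero.1 hcard
      have hRB : R = Bad := by
        apply Finset.Subset.antisymm hR
        intro x hx
        by_contra hxR
        have : x ∈ Bad \ R := Finset.mem_sdiff.2 ⟨hx, hxR⟩
        rw [hempty] at this
        exact absurd this (Finset.notMem_empty x)
      rw [hRB]
      exact ⟨ContinuousMap.HomotopyEquiv.refl _⟩
    | succ n ih =>
      intro R hR hcard
      have hne : (Bad \ R).Nonempty := Finset.card_pos.1 (by omega)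
      obtain ⟨I, hImem, hmax⟩ := Finset.exists_max_image (Bad \ R) sz hne
      have hIbad : ¬ BundleOK G C I :=
        (Finset.mem_filter.1 (Finset.mem_sdiff.1 hImem).1).2
      have hInR : I ∉ R := (Finset.mem_sdiff.1 hImem).2
      have hstep : Nonempty (ContinuousMap.HomotopyEquiv
          ((Kp G C).avoid R).realization ((Kp G C).avoid (insert I R)).realization) := by
        by_cases hvert : {I} ∈ ((Kp G C).avoid R).faces
        · -- link of I is coned by `hat G C I`; remove the star of I
          have heq : ((Kp G C).avoid R).delStar I = (Kp G C).avoid (insert I R) := by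
            apply ASC.ext'
            ext S
            simp only [ASC.delStar, ASC.avoid, Set.mem_setOf_eq, Finset.mem_insert]
            constructor
            · rintro ⟨⟨h1, h2⟩, h3⟩
              exact ⟨h1, fun a ha => by rcases ha with rfl | ha; exact h3; exact h2 a ha⟩
            · rintro ⟨h1, h2⟩
              exact ⟨⟨h1, fun a ha => h2 a (Or.inr ha)⟩, h2 I (Or.inl rfl)⟩
          rw [← heq]
          apply ASC.cone_delStar _ I (hat G C I) (hat_ne hIbad)
          -- the cone condition
          intro S hS hIS
          obtain ⟨hSp, hSR⟩ := hS
          have hIv : {I} ∈ (Kp G C).faces :=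
            (Kp G C).down_closed hSp (Finset.singleton_subset_iff.2 hIS)
          obtain ⟨⟨⟨htubes, hcompats⟩, hodds⟩, hles⟩ := hSp
          have htubeI : TubeIn G I := hIv.1.1.1 I (Finset.mem_singleton_self I)
          have hoddI : Odd (interCard I C) := hIv.1.2 I (Finset.mem_singleton_self I)
          have hleI : Le I (GammaTilde G C) := hIv.2 I (Finset.mem_singleton_self I)
          have hhat_tube : TubeIn G (hat G C I) := hat_tube hG hC htubeI hoddI
          have hhat_odd : Odd (interCard (hat G C I) C) := by
            rw [hat_interCard hC]; exact hoddI
          have hhat_le : Le (hat G C I) (GammaTilde G C) :=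
            ⟨hleI.1, Finset.union_subset hleI.2 (Finset.filter_subset _ _)⟩
          -- goodness of larger tubes in S
          have hgood : ∀ J ∈ S, Le I J → I ≠ J → BundleOK G C J := by
            intro J hJ hIJ hneJ
            by_contra hJbad
            have hJBad : J ∈ Bad := Finset.mem_filter.2 ⟨Finset.mem_univ J, hJbad⟩
            have hJnR : J ∉ R := fun h => hSR J h hJ
            have : J ∈ Bad \ R := Finset.mem_sdiff.2 ⟨hJBad, hJnR⟩
            have h1 := hmax J this
            have h2 := sz_lt_of_le_ne hIJ hneJ
            omega
          have hcompat_hat : ∀ J ∈ S, Compatible G (hat G C I) J := by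
            intro J hJ
            exact compat_hat_of (hcompats I hIS J hJ) (hgood J hJ)
          refine ⟨⟨⟨⟨?_, ?_⟩, ?_⟩, ?_⟩, ?_⟩
          · intro J hJ
            rcases Finset.mem_insert.1 hJ with rfl | hJ
            · exact hhat_tube
            · exact htubes J hJ
          · intro J1 hJ1 J2 hJ2
            rcases Finset.mem_insert.1 hJ1 with rfl | hJ1
            · rcases Finset.mem_insert.1 hJ2 with rfl | hJ2
              · exact Or.inl rfl
              · exact hcompat_hat J2 hJ2
            · rcases Finset.mem_insert.1 hJ2 with rfl | hJ2
              · exact compatible_symm (hcompat_hat J1 hJ1)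
              · exact hcompats J1 hJ1 J2 hJ2
          · intro J hJ
            rcases Finset.mem_insert.1 hJ with rfl | hJ
            · exact hhat_odd
            · exact hodds J hJ
          · intro J hJ
            rcases Finset.mem_insert.1 hJ with rfl | hJ
            · exact hhat_le
            · exact hles J hJ
          · intro a ha
            have habad : ¬ BundleOK G C a := (Finset.mem_filter.1 (hR ha)).2
            intro hmem
            rcases Finset.mem_insert.1 hmem with rfl | hmem
            · exact habad (hat_bundleOK G C I)
            · exact hSR a ha hmem
        · -- `I` is not a vertex of the current complex: nothing changes
          have heq : (Kp G C).avoid (insert I R) = (Kp G C).avoid R := by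
            apply ASC.ext'
            ext S
            simp only [ASC.avoid, Set.mem_setOf_eq, Finset.mem_insert]
            constructor
            · rintro ⟨h1, h2⟩
              exact ⟨h1, fun a ha => h2 a (Or.inr ha)⟩
            · rintro ⟨h1, h2⟩
              refine ⟨h1, fun a ha => ?_⟩
              rcases ha with rfl | ha
              · intro haS
                exact hvert (((Kp G C).avoid R).down_closed
                  (show S ∈ ((Kp G C).avoid R).faces from ⟨h1, h2⟩)
                  (Finset.singleton_subset_iff.2 haS))
              · exact h2 a ha
          rw [heq]
          exact ⟨ContinuousMap.HomotopyEquiv.refl _⟩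
      obtain ⟨e1⟩ := hstep
      have hcard' : (Bad \ insert I R).card = n := by
        rw [Finset.sdiff_insert, Finset.card_erase_of_mem hImem, hcard]
        omega
      obtain ⟨e2⟩ := ih (insert I R)
        (Finset.insert_subset (Finset.mem_sdiff.1 hImem).1 hR) hcard'
      exact ⟨e1.trans e2⟩
  have h0 : (Kp G C).avoid ∅ = Kp G C := by
    apply ASC.ext'
    ext S
    simp [ASC.avoid]
  have h1 : (Kp G C).avoid Bad = Kpp G C := by
    apply ASC.ext'
    ext S
    simp only [ASC.avoid, Set.mem_setOf_eq, hBad, Finset.mem_filter, Finset.mem_univ,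
      true_and, Kpp]
    constructor
    · rintro ⟨hS, hA⟩
      refine ⟨hS, fun J hJ => ?_⟩
      by_contra hJbad
      exact hA J hJbad hJ
    · rintro ⟨hS, hA⟩
      exact ⟨hS, fun a habad haS => habad (hA a haS)⟩
  obtain ⟨e⟩ := key (Bad \ ∅).card ∅ (Finset.empty_subset _) rfl
  rw [h0, h1] at e
  exact ⟨e⟩
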